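/- Let Γ₁ = C_{(1,−4)} be the image of φ : ℙ¹(ℂ) → ℙ³(ℂ), [x:y] ↦ [x⁵ : x⁴y − 4x²y³ : −4x³y² + xy⁴ : y⁵]. For [λ:μ] ∈ ℙ¹(ℂ), the set T_{[λ:μ]} = {t ∈ ℙ¹(ℂ) : φ(t) ∈ L_{[λ:μ]}} satisfies: T_{[1:1]} has exactly 4 elements; T_{[λ:μ]} has exactly 2 elements if [λ:μ] ∈ {[0:1], [3:1], [−5:1]}; and T_{[λ:μ]} is empty for all other [λ:μ]. In particular, a G-invariant line L_{[λ:μ]} ≠ L_{[1:1]} is either disjoint from Γ₁ or meets Γ₁ in precisely two points, and L_{[1:1]} meets Γ₁ in four points. -/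

import Mathlib

/-!
In the affine chart t = [z:1] the two equations of L_{[λ:μ]} pulled back along φ become
z(λz⁴ - 4μz² + μ) = 0 and μz⁴ - 4μz² + λ = 0, while t = [1:0] lies on L_{[λ:μ]} exactly when
λ = 0. The difference of the two quartics is (λ - μ)(z⁴ - 1), so for λ ≠ μ a solution has
z² = ±1, which forces λ = 3μ resp. λ = -5μ. For λ = μ what remains is
z⁴ - 4z² + 1 = (z² - 2 - √3)(z² - 2 + √3), with four distinct roots.
-/

noncomputable section

/-- Projective 3-space over ℂ. -/
abbrev P3 := Projectivization ℂ (Fin 4 → ℂ)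

/-- Projective line over ℂ. -/
abbrev P1 := Projectivization ℂ (Fin 2 → ℂ)

/-- Homogeneous coordinates of φ([x:y]) = [x⁵ : x⁴y − 4x²y³ : −4x³y² + xy⁴ : y⁵]
(the parametrization φ_{a,b} with (a,b) = (1,−4)). -/
def phiVec (x y : ℂ) : Fin 4 → ℂ :=
  ![x ^ 5, x ^ 4 * y - 4 * x ^ 2 * y ^ 3, -4 * x ^ 3 * y ^ 2 + x * y ^ 4, y ^ 5]

lemma phiVec_rep_ne_zero (t : P1) : phiVec (t.rep 0) (t.rep 1) ≠ 0 := by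
  intro h
  apply t.rep_nonzero
  have h0 := congrFun h 0
  have h3 := congrFun h 3
  simp [phiVec] at h0 h3
  funext i
  fin_cases i
  · simpa using h0
  · simpa using h3

/-- The map φ : ℙ¹ → ℙ³ with image the rational quintic Γ₁ = C_{(1,−4)}. -/
def phiP (t : P1) : P3 :=
  Projectivization.mk ℂ (phiVec (t.rep 0) (t.rep 1)) (phiVec_rep_ne_zero t)

/-- The line L_{[λ:μ]} = {λx₀ + μx₂ = 0, λx₃ + μx₁ = 0} ⊂ ℙ³. -/
def lineLM (l m : ℂ) : Set P3 :=
  {p : P3 | l * p.rep 0 + m * p.rep 2 = 0 ∧ l * p.rep 3 + m * p.rep 1 = 0}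

/-- T_{[λ:μ]} = {t ∈ ℙ¹ : φ(t) ∈ L_{[λ:μ]}}. -/
def secSet (l m : ℂ) : Set P1 := {t : P1 | phiP t ∈ lineLM l m}

section SquareRoots

variable {K : Type*} [Field K] [IsAlgClosed K] [CharZero K]

theorem encard_setOf_sq_eq {a : K} (ha : a ≠ 0) : {z : K | z ^ 2 = a}.encard = 2 := by
  obtain ⟨s, rfl⟩ := IsAlgClosed.exists_pow_nat_eq a two_pos
  have hs : s ≠ 0 := by rintro rfl; simp at ha
  have hset : {z : K | z ^ 2 = s ^ 2} = {s, -s} := by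
    ext z
    simp [sq_eq_sq_iff_eq_or_eq_neg]
  rw [hset, Set.encard_pair]
  simpa [CharZero.eq_neg_self_iff] using hs

theorem encard_setOf_sq_sub_mul_sq_sub_eq_zero {a b : K} (ha : a ≠ 0) (hb : b ≠ 0)
    (hab : a ≠ b) : {z : K | (z ^ 2 - a) * (z ^ 2 - b) = 0}.encard = 4 := by
  have hset : {z : K | (z ^ 2 - a) * (z ^ 2 - b) = 0} = {z | z ^ 2 = a} ∪ {z | z ^ 2 = b} := by
    ext z
    simp [sub_eq_zero]
  have hdisj : Disjoint {z : K | z ^ 2 = a} {z | z ^ 2 = b} :=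
    Set.disjoint_left.2 fun z (hza : z ^ 2 = a) (hzb : z ^ 2 = b) => hab (hza.symm.trans hzb)
  rw [hset, Set.encard_union_eq hdisj, encard_setOf_sq_eq ha, encard_setOf_sq_eq hb]
  rfl

end SquareRoots

open scoped LinearAlgebra.Projectivization

section ProjectiveLine

variable {K : Type*} [Field K]

def affinePt (z : K) : ℙ K (Fin 2 → K) := Projectivization.mk K ![z, 1] (by simp)

variable (K) in
def inftyPt : ℙ K (Fin 2 → K) := Projectivization.mk K ![1, 0] (by simp)

theorem affinePt_injective : Function.Injective (affinePt : K → ℙ K (Fin 2 → K)) := by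
  intro z w h
  obtain ⟨a, ha⟩ := (Projectivization.mk_eq_mk_iff' K _ _ _ _).1 h
  have h1 : a = 1 := by simpa using congrFun ha 1
  simpa [h1, eq_comm] using congrFun ha 0

theorem affinePt_ne_inftyPt (z : K) : affinePt z ≠ inftyPt K := by
  intro h
  obtain ⟨a, ha⟩ := (Projectivization.mk_eq_mk_iff' K _ _ _ _).1 h
  simpa using congrFun ha 1

theorem eq_inftyPt_or_exists_eq_affinePt (t : ℙ K (Fin 2 → K)) :
    t = inftyPt K ∨ ∃ z, t = affinePt z := by
  induction t with | h v hv => ?_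
  by_cases hv1 : v 1 = 0
  · have hv0 : v 0 ≠ 0 := fun hv0 => hv (by ext i; fin_cases i <;> simp [hv0, hv1])
    left
    refine (Projectivization.mk_eq_mk_iff' K _ _ _ _).2 ⟨v 0, ?_⟩
    ext i; fin_cases i <;> simp [hv1]
  · right
    refine ⟨v 0 / v 1, (Projectivization.mk_eq_mk_iff' K _ _ _ _).2 ⟨v 1, ?_⟩⟩
    ext i; fin_cases i <;> simp [mul_div_cancel₀ _ hv1]

end ProjectiveLine

def IsOnLine (l m : ℂ) (w : Fin 4 → ℂ) : Prop :=
  l * w 0 + m * w 2 = 0 ∧ l * w 3 + m * w 1 = 0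

theorem isOnLine_smul_iff {l m c : ℂ} (hc : c ≠ 0) (w : Fin 4 → ℂ) :
    IsOnLine l m (c • w) ↔ IsOnLine l m w := by
  have scale : ∀ p q, l * (c * p) + m * (c * q) = c * (l * p + m * q) := fun p q => by ring
  simp [IsOnLine, scale, hc]

theorem mk_mem_lineLM_iff {l m : ℂ} (w : Fin 4 → ℂ) (hw : w ≠ 0) :
    Projectivization.mk ℂ w hw ∈ lineLM l m ↔ IsOnLine l m w := by
  obtain ⟨a, ha⟩ := Projectivization.exists_smul_eq_mk_rep ℂ w hw
  rw [← isOnLine_smul_iff a.ne_zero, ← Units.smul_def, ha]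
  rfl

theorem phiVec_mul (c x y : ℂ) : phiVec (c * x) (c * y) = c ^ 5 • phiVec x y := by
  ext i; fin_cases i <;> simp [phiVec] <;> ring

theorem mk_mem_secSet_iff {l m : ℂ} (v : Fin 2 → ℂ) (hv : v ≠ 0) :
    Projectivization.mk ℂ v hv ∈ secSet l m ↔ IsOnLine l m (phiVec (v 0) (v 1)) := by
  obtain ⟨a, ha⟩ := Projectivization.exists_smul_eq_mk_rep ℂ v hv
  rw [secSet, Set.mem_ofPred_eq, phiP, mk_mem_lineLM_iff, ← ha, Units.smul_def, Pi.smul_apply,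
    Pi.smul_apply, smul_eq_mul, smul_eq_mul, phiVec_mul,
    isOnLine_smul_iff (pow_ne_zero 5 a.ne_zero)]

def secRoots (l m : ℂ) : Set ℂ :=
  {z | z * (l * z ^ 4 - 4 * m * z ^ 2 + m) = 0 ∧ m * z ^ 4 - 4 * m * z ^ 2 + l = 0}

theorem affinePt_mem_secSet_iff {l m z : ℂ} : affinePt z ∈ secSet l m ↔ z ∈ secRoots l m := by
  rw [affinePt, mk_mem_secSet_iff]
  refine and_congr ?_ ?_ <;>
    simp only [phiVec, Matrix.cons_val_zero, Matrix.cons_val_one, Matrix.cons_val_two,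
      Matrix.cons_val_three, Matrix.head_cons, Matrix.tail_cons] <;>
    constructor <;> intro h <;> linear_combination h

theorem inftyPt_mem_secSet_iff {l m : ℂ} : inftyPt ℂ ∈ secSet l m ↔ l = 0 := by
  rw [inftyPt, mk_mem_secSet_iff]
  simp [IsOnLine, phiVec]

theorem secSet_eq_image_secRoots {l m : ℂ} (hl : l ≠ 0) :
    secSet l m = affinePt '' secRoots l m := by
  ext t
  rcases eq_inftyPt_or_exists_eq_affinePt t with rfl | ⟨z, rfl⟩
  · simp [inftyPt_mem_secSet_iff, hl, affinePt_ne_inftyPt]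
  · rw [affinePt_mem_secSet_iff, affinePt_injective.mem_set_image]

theorem encard_secSet {l m : ℂ} (hl : l ≠ 0) : (secSet l m).encard = (secRoots l m).encard := by
  rw [secSet_eq_image_secRoots hl, affinePt_injective.encard_image]

theorem secRoots_self {l : ℂ} (hl : l ≠ 0) : secRoots l l = {z | z ^ 4 - 4 * z ^ 2 + 1 = 0} := by
  ext z
  have hfac : l * z ^ 4 - 4 * l * z ^ 2 + l = l * (z ^ 4 - 4 * z ^ 2 + 1) := by ring
  simp only [secRoots, Set.mem_ofPred_eq, hfac, mul_eq_zero, hl, false_or]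
  exact ⟨And.right, fun h => ⟨Or.inr h, h⟩⟩

theorem mem_secRoots_iff_of_ne {l m z : ℂ} (hl : l ≠ 0) (hlm : l ≠ m) :
    z ∈ secRoots l m ↔ (l = 3 * m ∧ z ^ 2 = 1) ∨ (l = -5 * m ∧ z ^ 2 = -1) := by
  constructor
  · rintro ⟨hP, hQ⟩
    have hz : z ≠ 0 := by rintro rfl; exact hl (by linear_combination hQ)
    replace hP := (mul_eq_zero.1 hP).resolve_left hz
    have hdiff : (l - m) * ((z ^ 2 - 1) * (z ^ 2 + 1)) = 0 := by linear_combination hP - hQ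
    have hz4 := (mul_eq_zero.1 hdiff).resolve_left (sub_ne_zero.2 hlm)
    rcases mul_eq_zero.1 hz4 with h | h
    · exact Or.inl ⟨by linear_combination hQ - (m * z ^ 2 - 3 * m) * h, by linear_combination h⟩
    · exact Or.inr ⟨by linear_combination hQ - (m * z ^ 2 - 5 * m) * h, by linear_combination h⟩
  · rintro (⟨rfl, h⟩ | ⟨rfl, h⟩)
    · exact ⟨by linear_combination (3 * m * z * (z ^ 2 + 1) - 4 * m * z) * h,
        by linear_combination (m * z ^ 2 - 3 * m) * h⟩
    · exact ⟨by linear_combination (-5 * m * z * (z ^ 2 - 1) - 4 * m * z) * h,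
        by linear_combination (m * z ^ 2 - 5 * m) * h⟩

theorem encard_secSet_self {l : ℂ} (hl : l ≠ 0) : (secSet l l).encard = 4 := by
  obtain ⟨s, hs⟩ := IsAlgClosed.exists_pow_nat_eq (3 : ℂ) two_pos
  have hs0 : s ≠ 0 := by rintro rfl; norm_num at hs
  have hprod : (2 + s) * (2 - s) = 1 := by linear_combination -hs
  have hset : {z : ℂ | z ^ 4 - 4 * z ^ 2 + 1 = 0} =
      {z | (z ^ 2 - (2 + s)) * (z ^ 2 - (2 - s)) = 0} := by
    ext z
    simp only [Set.mem_ofPred_eq]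
    exact ⟨fun h => by linear_combination h - hs, fun h => by linear_combination h + hs⟩
  rw [encard_secSet hl, secRoots_self hl, hset]
  exact encard_setOf_sq_sub_mul_sq_sub_eq_zero (left_ne_zero_of_mul_eq_one hprod)
    (right_ne_zero_of_mul_eq_one hprod) (fun h => hs0 (by linear_combination h / 2))

theorem secSet_zero_left {m : ℂ} (hm : m ≠ 0) : secSet 0 m = {inftyPt ℂ, affinePt 0} := by
  ext t
  rcases eq_inftyPt_or_exists_eq_affinePt t with rfl | ⟨z, rfl⟩
  · simp [inftyPt_mem_secSet_iff]
  · simp only [affinePt_mem_secSet_iff, Set.mem_insert_iff, Set.mem_singleton_iff,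
      affinePt_ne_inftyPt, affinePt_injective.eq_iff, false_or]
    refine ⟨fun ⟨hP, hQ⟩ => by_contra fun hz => hm ?_, by rintro rfl; simp [secRoots]⟩
    have hP' := (mul_eq_zero.1 hP).resolve_left hz
    -- z ≠ 0 forces z² = 1/4 by the first equation, but z² ∈ {0, 4} by the second.
    linear_combination ((15 - 4 * z ^ 2) * hP' - 16 * hQ) / 15

theorem encard_secSet_of_eq_three_mul {l m : ℂ} (hm : m ≠ 0) (h : l = 3 * m) :
    (secSet l m).encard = 2 := by
  have hl : l ≠ 0 := by simpa [h] using hm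
  have hlm : l ≠ m := fun h' => hm (by linear_combination (h' - h) / 2)
  have hl5 : l ≠ -5 * m := fun h' => hm (by linear_combination (h' - h) / 8)
  have hset : secRoots l m = {z | z ^ 2 = 1} := by
    ext z
    rw [mem_secRoots_iff_of_ne hl hlm, Set.mem_ofPred_eq]
    exact ⟨fun hz => hz.elim And.right fun h5 => absurd h5.1 hl5, fun hz => Or.inl ⟨h, hz⟩⟩
  rw [encard_secSet hl, hset, encard_setOf_sq_eq one_ne_zero]

theorem encard_secSet_of_eq_neg_five_mul {l m : ℂ} (hm : m ≠ 0) (h : l = -5 * m) :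
    (secSet l m).encard = 2 := by
  have hl : l ≠ 0 := by simpa [h] using hm
  have hlm : l ≠ m := fun h' => hm (by linear_combination (h - h') / 6)
  have hl3 : l ≠ 3 * m := fun h' => hm (by linear_combination (h - h') / 8)
  have hset : secRoots l m = {z | z ^ 2 = -1} := by
    ext z
    rw [mem_secRoots_iff_of_ne hl hlm, Set.mem_ofPred_eq]
    exact ⟨fun hz => hz.elim (fun h3 => absurd h3.1 hl3) And.right, fun hz => Or.inr ⟨h, hz⟩⟩
  rw [encard_secSet hl, hset, encard_setOf_sq_eq (neg_ne_zero.2 one_ne_zero)]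

theorem secSet_eq_empty {l m : ℂ} (hlm : l ≠ m) (hl : l ≠ 0) (hl3 : l ≠ 3 * m)
    (hl5 : l ≠ -5 * m) : secSet l m = ∅ := by
  rw [secSet_eq_image_secRoots hl, Set.image_eq_empty, Set.eq_empty_iff_forall_notMem]
  intro z hz
  rcases (mem_secRoots_iff_of_ne hl hlm).1 hz with h | h
  exacts [hl3 h.1, hl5 h.1]

/-- for the quintic Γ₁ = C_{(1,−4)} and the G-invariant lines L_{[λ:μ]}:
T_{[1:1]} has exactly 4 elements (L_{[1:1]} is the quadrisecant); T_{[λ:μ]} has exactly 2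
elements for [λ:μ] ∈ {[0:1], [3:1], [−5:1]}; and T_{[λ:μ]} = ∅ for all other [λ:μ]. -/
theorem stmt6 (l m : ℂ) (h : (![l, m] : Fin 2 → ℂ) ≠ 0) :
    (l = m → (secSet l m).encard = 4) ∧
      ((l = 0 ∨ l = 3 * m ∨ l = -5 * m) → (secSet l m).encard = 2) ∧
      ((l ≠ m ∧ l ≠ 0 ∧ l ≠ 3 * m ∧ l ≠ -5 * m) → secSet l m = ∅) := by
  have hm : l = 0 → m ≠ 0 := fun hl hm0 => h (by simp [hl, hm0])
  refine ⟨fun hlm => ?_, ?_, fun ⟨hlm, hl, hl3, hl5⟩ => secSet_eq_empty hlm hl hl3 hl5⟩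
  · subst hlm
    exact encard_secSet_self fun hl => hm hl hl
  · rintro (hl | hl | hl)
    · subst hl
      rw [secSet_zero_left (hm rfl), Set.encard_pair (affinePt_ne_inftyPt 0).symm]
    · exact encard_secSet_of_eq_three_mul (fun hm0 => hm (by simp [hl, hm0]) hm0) hl
    · exact encard_secSet_of_eq_neg_five_mul (fun hm0 => hm (by simp [hl, hm0]) hm0) hl
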